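/- In the autonomy-aware clustering setup with squared Euclidean cost and autonomy independent of Y, suppose every cluster mass p_πρ^{Y(t)}(ℓ) is strictly positive. Then one simultaneous pass of the fixed-point iteration—computing π_{Y(t)}^β(j|i) = softmax_j(−β d_avg(x_i, y_j(t))) and then setting y_ℓ(t+1) = (Σ_i Σ_j ρ(i) p(ℓ|j,i) π_{Y(t)}^β(j|i) x_i) / (Σ_i Σ_j ρ(i) p(ℓ|j,i) π_{Y(t)}^β(j|i)) for every ℓ—is exactly the preconditioned gradient-descent step Y(t+1) = Y(t) − (1/2) (P̂_πρ^{Y(t)})^{−1} ∇F(Y(t)), where P̂_πρ^{Y(t)} = P_πρ^{Y(t)} ⊗ I_d and P_πρ^{Y(t)} ∈ ℝ^{K×K} is the diagonal matrix with entries [P_πρ^{Y(t)}]_{ℓℓ} = p_πρ^{Y(t)}(ℓ) = Σ_{i,j} ρ(i) π_{Y(t)}^β(j|i) p(ℓ|j,i). -/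

import Mathlib

/-!
The free energy is a weighted sum of log-sum-exp functions, so its gradient is the
Gibbs-weighted average of the gradients of the average costs. For the squared Euclidean cost the
`ℓ`-th block of `∇F(Y)` is therefore `2 (p(ℓ) y_ℓ - ∑ᵢ ∑ⱼ ρ(i) p(ℓ|j,i) π(j|i) xᵢ)`, whose
zero is the weighted centroid; one preconditioned step of size `1/(2 p(ℓ))` lands exactly on it.
-/

open Real

section LogSumExp

variable {E : Type*} [NormedAddCommGroup E] [NormedSpace ℝ E] {κ : Type*} [Fintype κ] [Nonempty κ]

theorem HasFDerivAt.log_sum_exp {f : κ → E → ℝ} {f' : κ → E →L[ℝ] ℝ} {y : E}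
    (hf : ∀ j, HasFDerivAt (f j) (f' j) y) :
    HasFDerivAt (fun z => Real.log (∑ j, Real.exp (f j z)))
      (∑ j, (Real.exp (f j y) / ∑ l, Real.exp (f l y)) • f' j) y := by
  have hpos : 0 < ∑ l, Real.exp (f l y) :=
    Finset.sum_pos (fun l _ => exp_pos _) Finset.univ_nonempty
  convert (HasFDerivAt.fun_sum fun j _ => (hf j).exp).log hpos.ne' using 1
  simp only [Finset.smul_sum, smul_smul, div_eq_inv_mul]

end LogSumExp

section FreeEnergy

variable {E : Type*} {ι κ : Type*} [Fintype ι] [Fintype κ]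

noncomputable def gibbs (β : ℝ) (c : κ → ℝ) (j : κ) : ℝ :=
  exp (-β * c j) / ∑ l, exp (-β * c l)

noncomputable def freeEnergy (β : ℝ) (ρ : ι → ℝ) (D : E → ι → κ → ℝ) (Z : E) : ℝ :=
  -(1 / β) * ∑ i, ρ i * log (∑ j, exp (-β * D Z i j))

variable [NormedAddCommGroup E] [InnerProductSpace ℝ E] [CompleteSpace E] [Nonempty κ]

theorem hasGradientAt_freeEnergy {β : ℝ} (hβ : β ≠ 0) (ρ : ι → ℝ) {D : E → ι → κ → ℝ}
    {g : ι → κ → E} {Y : E} (hD : ∀ i j, HasGradientAt (D · i j) (g i j) Y) :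
    HasGradientAt (freeEnergy β ρ D) (∑ i, ρ i • ∑ j, gibbs β (D Y i) j • g i j) Y := by
  simp only [hasGradientAt_iff_hasFDerivAt] at hD ⊢
  have h := (HasFDerivAt.fun_sum (u := Finset.univ) fun i _ =>
    (HasFDerivAt.log_sum_exp fun j => (hD i j).const_mul (-β)).const_mul (ρ i)).const_mul
      (-(1 / β))
  refine h.congr_fderiv ?_
  simp only [map_sum, map_smul, Finset.smul_sum, smul_smul, gibbs]
  refine Finset.sum_congr rfl fun i _ => Finset.sum_congr rfl fun j _ => ?_
  congr 1
  field_simp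

end FreeEnergy

theorem PiLp.hasGradientAt_sum_mul_norm_sub_sq {ι : Type*} [Fintype ι] {E : ι → Type*}
    [∀ k, NormedAddCommGroup (E k)] [∀ k, InnerProductSpace ℝ (E k)] [∀ k, CompleteSpace (E k)]
    (c : ι → ℝ) (a : ∀ k, E k) (Y : PiLp 2 E) :
    HasGradientAt (fun Z : PiLp 2 E => ∑ k, c k * ‖a k - Z k‖ ^ 2)
      (WithLp.toLp 2 fun k => (2 * c k) • (Y k - a k)) Y := by
  rw [hasGradientAt_iff_hasFDerivAt]
  have h := HasFDerivAt.fun_sum (u := Finset.univ) fun k _ =>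
    ((PiLp.hasFDerivAt_apply (𝕜 := ℝ) 2 Y k).const_sub (a k)).norm_sq.const_mul (c k)
  refine h.congr_fderiv ?_
  ext v
  simp only [map_sub, ContinuousLinearMap.comp_neg, ContinuousLinearMap.sub_comp, neg_sub,
    _root_.sum_apply, _root_.smul_apply, _root_.sub_apply,
    ContinuousLinearMap.comp_apply, PiLp.proj_apply, coe_innerSL_apply, nsmul_eq_mul,
    Nat.cast_ofNat, smul_eq_mul, InnerProductSpace.toDual_apply_apply, PiLp.inner_apply,
    real_inner_smul_left, inner_sub_left]
  exact Finset.sum_congr rfl fun k _ => by ring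

-- `P̂ ⊗ I_d` acts on the `ℓ`-th block of `ℝ^{Kd}` as multiplication by `mass ℓ`, so the
-- preconditioned step is stated blockwise.
theorem stmt_3_general (N K d : ℕ) (β : ℝ) (hβ : 0 < β)
    (x : Fin N → EuclideanSpace ℝ (Fin d)) (ρ : Fin N → ℝ)
    (p : Fin K → Fin K → Fin N → ℝ)
    (davg : (PiLp 2 fun _ : Fin K => EuclideanSpace ℝ (Fin d)) → Fin N → Fin K → ℝ)
    (hdavg : ∀ Y i j, davg Y i j = ∑ k, p k j i * ‖x i - Y k‖ ^ 2)
    (πpol : (PiLp 2 fun _ : Fin K => EuclideanSpace ℝ (Fin d)) → Fin K → Fin N → ℝ)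
    (hπ : ∀ Y j i, πpol Y j i =
      Real.exp (-β * davg Y i j) / ∑ ℓ, Real.exp (-β * davg Y i ℓ))
    (F : (PiLp 2 fun _ : Fin K => EuclideanSpace ℝ (Fin d)) → ℝ)
    (hF : ∀ Y, F Y = -(1 / β) * ∑ i, ρ i * Real.log (∑ j, Real.exp (-β * davg Y i j)))
    (Y : PiLp 2 fun _ : Fin K => EuclideanSpace ℝ (Fin d))
    (mass : Fin K → ℝ)
    (hmassdef : ∀ ℓ, mass ℓ = ∑ i, ∑ j, ρ i * πpol Y j i * p ℓ j i)
    (hmasspos : ∀ ℓ, 0 < mass ℓ)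
    (Ynext : PiLp 2 fun _ : Fin K => EuclideanSpace ℝ (Fin d))
    (hYnext : ∀ ℓ, Ynext ℓ = (∑ i, ∑ j, ρ i * p ℓ j i * πpol Y j i)⁻¹ •
        ∑ i, ∑ j, (ρ i * p ℓ j i * πpol Y j i) • x i) :
    ∀ ℓ, Ynext ℓ = Y ℓ - ((1 / 2) * (mass ℓ)⁻¹) • gradient F Y ℓ := by
  intro ℓ
  have : Nonempty (Fin K) := ⟨ℓ⟩
  obtain rfl : F = freeEnergy β ρ davg := funext hF
  have hD : ∀ i j, HasGradientAt (davg · i j)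
      (WithLp.toLp 2 fun k => (2 * p k j i) • (Y k - x i)) Y := fun i j => by
    simpa only [hdavg] using PiLp.hasGradientAt_sum_mul_norm_sub_sq (p · j i) (fun _ => x i) Y
  have hgibbs : ∀ i j, gibbs β (davg Y i) j = πpol Y j i := fun i j => (hπ Y j i).symm
  have hmass : ∑ i, ∑ j, ρ i * p ℓ j i * πpol Y j i = mass ℓ := by
    simp only [hmassdef, mul_right_comm]
  have hgrad : gradient (freeEnergy β ρ davg) Y ℓ
      = (2 : ℝ) • (mass ℓ • Y ℓ - ∑ i, ∑ j, (ρ i * p ℓ j i * πpol Y j i) • x i) := by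
    rw [(hasGradientAt_freeEnergy hβ.ne' ρ hD).gradient, ← hmass]
    simp only [WithLp.ofLp_sum, WithLp.ofLp_smul, Finset.sum_apply, Pi.smul_apply, hgibbs,
      Finset.smul_sum, smul_sub, Finset.sum_sub_distrib, Finset.sum_smul, smul_smul]
    congr 1 <;> exact Finset.sum_congr rfl fun i _ => Finset.sum_congr rfl fun j _ => by
      congr 1; ring
  rw [hYnext, hmass, hgrad, smul_smul, smul_sub, smul_smul]
  have hm := (hmasspos ℓ).ne'
  rw [show 1 / 2 * (mass ℓ)⁻¹ * 2 * mass ℓ = 1 by field_simp,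
    show 1 / 2 * (mass ℓ)⁻¹ * 2 = (mass ℓ)⁻¹ by ring, one_smul, sub_sub_cancel]

/-- One simultaneous pass of the fixed-point iteration (Gibbs policy followed
by the weighted-centroid update) equals the preconditioned gradient-descent step
`Y(t+1) = Y(t) − (1/2) (P̂_πρ^{Y(t)})⁻¹ ∇F(Y(t))`, where `P̂_πρ^{Y(t)} = P_πρ^{Y(t)} ⊗ I_d`
is block-diagonal with the cluster masses on the diagonal; blockwise this means
`y_ℓ(t+1) = y_ℓ(t) − (1/2) (p_πρ^{Y(t)}(ℓ))⁻¹ (∇F(Y(t)))_ℓ` for every `ℓ`. -/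
theorem stmt_3 (N K d : ℕ) (β : ℝ) (hβ : 0 < β)
    (x : Fin N → EuclideanSpace ℝ (Fin d)) (ρ : Fin N → ℝ)
    (hρ : ∀ i, 0 ≤ ρ i) (hρ1 : ∑ i, ρ i = 1)
    (p : Fin K → Fin K → Fin N → ℝ)
    (hp : ∀ k j i, 0 ≤ p k j i) (hp1 : ∀ j i, ∑ k, p k j i = 1)
    (davg : (PiLp 2 fun _ : Fin K => EuclideanSpace ℝ (Fin d)) → Fin N → Fin K → ℝ)
    (hdavg : ∀ Y i j, davg Y i j = ∑ k, p k j i * ‖x i - Y k‖ ^ 2)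
    (πpol : (PiLp 2 fun _ : Fin K => EuclideanSpace ℝ (Fin d)) → Fin K → Fin N → ℝ)
    (hπ : ∀ Y j i, πpol Y j i =
      Real.exp (-β * davg Y i j) / ∑ ℓ, Real.exp (-β * davg Y i ℓ))
    (F : (PiLp 2 fun _ : Fin K => EuclideanSpace ℝ (Fin d)) → ℝ)
    (hF : ∀ Y, F Y = -(1 / β) * ∑ i, ρ i * Real.log (∑ j, Real.exp (-β * davg Y i j)))
    (Y : PiLp 2 fun _ : Fin K => EuclideanSpace ℝ (Fin d))
    (mass : Fin K → ℝ)
    (hmassdef : ∀ ℓ, mass ℓ = ∑ i, ∑ j, ρ i * πpol Y j i * p ℓ j i)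
    (hmasspos : ∀ ℓ, 0 < mass ℓ)
    (Ynext : PiLp 2 fun _ : Fin K => EuclideanSpace ℝ (Fin d))
    (hYnext : ∀ ℓ, Ynext ℓ = (∑ i, ∑ j, ρ i * p ℓ j i * πpol Y j i)⁻¹ •
        ∑ i, ∑ j, (ρ i * p ℓ j i * πpol Y j i) • x i) :
    ∀ ℓ, Ynext ℓ = Y ℓ - ((1 / 2) * (mass ℓ)⁻¹) • gradient F Y ℓ :=
  stmt_3_general N K d β hβ x ρ p davg hdavg πpol hπ F hF Y mass hmassdef hmasspos Ynext hYnext
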